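/- Let φ ∈ ℝ[z_1,…,z_h] be a homogeneous polynomial of degree 3. For z ∈ ℂ^h with y = Im z ∈ ℝ^h, the following identities hold: (a) ⟨ω(z), conj(ω(z))⟩ = 8√−1·φ(y); (b) ⟨ω_i(z), conj(ω_j(z))⟩ = 2√−1·(∂²φ/∂z_i∂z_j)(y) for all i, j ∈ {1,…,h}; and (c) ⟨ω_i(z), conj(ω(z))⟩ = 4·(∂φ/∂z_i)(y) for all i ∈ {1,…,h}. -/

import Mathlib

open MvPolynomial

/-- The symplectic form on `ℂ^{2h+2}`, where a vector is recorded as the pair of its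
`e_0, e_1, …, e_h`-coordinates and its `f_0, f_1, …, f_h`-coordinates:
`⟨e_i, e_j⟩ = ⟨f_i, f_j⟩ = 0` and `⟨e_i, f_j⟩ = δ_{ij}`. -/
noncomputable def symp {h : ℕ} (x y : (Fin (h+1) → ℂ) × (Fin (h+1) → ℂ)) : ℂ :=
  ∑ j, (x.1 j * y.2 j - x.2 j * y.1 j)

/-- Coordinatewise complex conjugation with respect to the real basis `e_i, f_i`. -/
noncomputable def conjV {h : ℕ} (x : (Fin (h+1) → ℂ) × (Fin (h+1) → ℂ)) :
    (Fin (h+1) → ℂ) × (Fin (h+1) → ℂ) :=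
  (fun j => starRingEnd ℂ (x.1 j), fun j => starRingEnd ℂ (x.2 j))

/-- `ω(z) = −φ(z)·e_0 + Σᵢ (∂φ/∂z_i)(z)·e_i + Σᵢ z_i·f_i + f_0` for a real cubic `φ`. -/
noncomputable def omR {h : ℕ} (φ : MvPolynomial (Fin h) ℝ) (z : Fin h → ℂ) :
    (Fin (h+1) → ℂ) × (Fin (h+1) → ℂ) :=
  (Fin.cons (-(aeval z φ)) (fun i => aeval z (pderiv i φ)), Fin.cons 1 z)

/-- `ω_i(z) = ∂ω/∂z_i = −(∂φ/∂z_i)(z)·e_0 + Σⱼ (∂²φ/∂z_i∂z_j)(z)·e_j + f_i`. -/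
noncomputable def omRd {h : ℕ} (φ : MvPolynomial (Fin h) ℝ) (i : Fin h)
    (z : Fin h → ℂ) : (Fin (h+1) → ℂ) × (Fin (h+1) → ℂ) :=
  (Fin.cons (-(aeval z (pderiv i φ))) (fun j => aeval z (pderiv i (pderiv j φ))),
    Fin.cons 0 (Pi.single i 1))

/-!
Since `φ` has real coefficients, `conj ω(z)` is `ω` evaluated at `z̄`, so every pairing is a
combination of values of `φ`, `∂ᵢφ`, `∂ᵢ∂ⱼφ` (homogeneous of degrees 3, 2, 1) and of their first
derivatives at `z` and `z̄`. Each such combination is `ℝ`-linear in the form, so it suffices to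
check it on monomials `z_{s₁} ⋯ z_{sₙ}`, where it factors as `±∏ₖ (z_{sₖ} - z̄_{sₖ})` and
`z - z̄ = 2√−1 · Im z`.
-/

namespace MvPolynomial

section Homogeneous

variable {σ R : Type*} [CommSemiring R]

theorem IsHomogeneous.mem_span_prod_X {φ : MvPolynomial σ R} {n : ℕ} (hφ : φ.IsHomogeneous n) :
    φ ∈ Submodule.span R {p | ∃ s : Fin n → σ, p = ∏ k, X (s k)} := by
  rw [← mem_homogeneousSubmodule, ← homogeneousSubmodule_one_pow,
    homogeneousSubmodule_one_eq_span_X, Submodule.span_pow] at hφ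
  refine Submodule.span_mono (fun p hp => ?_) hφ
  obtain ⟨f, rfl⟩ := Set.mem_pow.mp hp
  refine ⟨fun k => (f k).2.choose, ?_⟩
  simp only [List.prod_ofFn, (f _).2.choose_spec]

theorem IsHomogeneous.linearMap_ext {M : Type*} [AddCommMonoid M] [Module R M]
    {f g : MvPolynomial σ R →ₗ[R] M} {φ : MvPolynomial σ R} {n : ℕ} (hφ : φ.IsHomogeneous n)
    (hfg : ∀ s : Fin n → σ, f (∏ k, X (s k)) = g (∏ k, X (s k))) : f φ = g φ :=
  LinearMap.eqOn_span (by rintro _ ⟨s, rfl⟩; exact hfg s) hφ.mem_span_prod_X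

end Homogeneous

theorem pderiv_pderiv_comm {σ R : Type*} [CommRing R] (i j : σ) (p : MvPolynomial σ R) :
    pderiv i (pderiv j p) = pderiv j (pderiv i p) := by
  have hbracket : ⁅pderiv i, pderiv j⁆ = (0 : Derivation R (MvPolynomial σ R) _) :=
    derivation_ext fun k => by
      classical
      rw [Derivation.commutator_apply, pderiv_X, pderiv_X]
      simp only [Pi.single_apply]
      split_ifs <;> simp
  have := congr($hbracket p)
  rw [Derivation.commutator_apply] at this
  simpa [sub_eq_zero] using this

section DirDeriv

variable {σ R S : Type*} [Fintype σ] [CommSemiring R] [CommSemiring S] [Algebra R S]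

/-- The derivative `Σₘ wₘ (∂P/∂zₘ)(z)` of `P` at `z` in the direction `w`. -/
noncomputable def dirDeriv (z w : σ → S) : MvPolynomial σ R →ₗ[R] S :=
  ∑ m, w m • ((aeval z).toLinearMap ∘ₗ (pderiv m).toLinearMap)

theorem dirDeriv_apply (z w : σ → S) (P : MvPolynomial σ R) :
    dirDeriv z w P = ∑ m, w m * aeval z (pderiv m P) := by
  simp [dirDeriv, LinearMap.sum_apply]

theorem dirDeriv_X (z w : σ → S) (p : σ) : dirDeriv (R := R) z w (X p) = w p := by
  classical
  simp [dirDeriv_apply, pderiv_X, Pi.single_apply]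

theorem dirDeriv_mul (z w : σ → S) (P Q : MvPolynomial σ R) :
    dirDeriv z w (P * Q) = aeval z P * dirDeriv z w Q + aeval z Q * dirDeriv z w P := by
  simp only [dirDeriv_apply, Derivation.leibniz, smul_eq_mul, map_add, map_mul,
    Finset.mul_sum]
  rw [← Finset.sum_add_distrib]
  exact Finset.sum_congr rfl fun m _ => by ring

end DirDeriv

section Complex

variable {σ : Type*}

theorem conj_aeval (z : σ → ℂ) (P : MvPolynomial σ ℝ) :
    starRingEnd ℂ (aeval z P) = aeval (star z) P :=
  comp_aeval_apply (f := z) (Complex.conjAe : ℂ →ₐ[ℝ] ℂ) P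

theorem aeval_ofReal (y : σ → ℝ) (P : MvPolynomial σ ℝ) :
    aeval (fun k => (y k : ℂ)) P = eval y P :=
  aeval_algebraMap_apply ℂ y P

theorem self_sub_star_apply (z : σ → ℂ) (k : σ) :
    z k - star z k = 2 * Complex.I * (z k).im := by
  rw [Pi.star_apply, Complex.star_def, Complex.sub_conj]
  push_cast
  ring

theorem aeval_sub_aeval_star_of_isHomogeneous {L : MvPolynomial σ ℝ} (hL : L.IsHomogeneous 1)
    (z : σ → ℂ) :
    aeval z L - aeval (star z) L = 2 * Complex.I * (eval (fun k => (z k).im) L : ℂ) := by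
  rw [← aeval_ofReal]
  refine hL.linearMap_ext (f := (aeval z).toLinearMap - (aeval (star z)).toLinearMap)
    (g := (2 * Complex.I) • (aeval fun k => ((z k).im : ℂ)).toLinearMap) fun s => ?_
  simp only [LinearMap.sub_apply, LinearMap.smul_apply, AlgHom.toLinearMap_apply,
    Fin.prod_univ_one, aeval_X, smul_eq_mul, self_sub_star_apply]

variable [Fintype σ]

theorem dirDeriv_star_sub_aeval_sub_aeval_star_of_isHomogeneous {Q : MvPolynomial σ ℝ}
    (hQ : Q.IsHomogeneous 2) (z : σ → ℂ) :
    dirDeriv z (star z) Q - aeval z Q - aeval (star z) Q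
      = 4 * (eval (fun k => (z k).im) Q : ℂ) := by
  rw [← aeval_ofReal]
  refine hQ.linearMap_ext (f := dirDeriv z (star z) - (aeval z).toLinearMap
      - (aeval (star z)).toLinearMap)
    (g := (4 : ℂ) • (aeval fun k => ((z k).im : ℂ)).toLinearMap) fun s => ?_
  simp only [LinearMap.sub_apply, LinearMap.smul_apply, AlgHom.toLinearMap_apply,
    Fin.prod_univ_two, map_mul, aeval_X, dirDeriv_mul, dirDeriv_X, smul_eq_mul]
  calc _ = -((z (s 0) - star z (s 0)) * (z (s 1) - star z (s 1))) := by ring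
    _ = _ := by
      simp only [self_sub_star_apply]
      linear_combination (-4 * ((z (s 0)).im : ℂ) * (z (s 1)).im) * Complex.I_sq

theorem aeval_star_sub_aeval_add_dirDeriv_star_sub_dirDeriv_of_isHomogeneous
    {φ : MvPolynomial σ ℝ} (hφ : φ.IsHomogeneous 3) (z : σ → ℂ) :
    aeval (star z) φ - aeval z φ + dirDeriv z (star z) φ - dirDeriv (star z) z φ
      = 8 * Complex.I * (eval (fun k => (z k).im) φ : ℂ) := by
  rw [← aeval_ofReal]
  refine hφ.linearMap_ext (f := (aeval (star z)).toLinearMap - (aeval z).toLinearMap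
      + dirDeriv z (star z) - dirDeriv (star z) z)
    (g := (8 * Complex.I) • (aeval fun k => ((z k).im : ℂ)).toLinearMap) fun s => ?_
  simp only [LinearMap.sub_apply, LinearMap.add_apply, LinearMap.smul_apply,
    AlgHom.toLinearMap_apply, Fin.prod_univ_three, map_mul, aeval_X, dirDeriv_mul, dirDeriv_X,
    smul_eq_mul]
  calc _ = -((z (s 0) - star z (s 0)) * (z (s 1) - star z (s 1))
          * (z (s 2) - star z (s 2))) := by ring
    _ = _ := by
      simp only [self_sub_star_apply]
      linear_combination
        (-8 * Complex.I * (z (s 0)).im * (z (s 1)).im * (z (s 2)).im) * Complex.I_sq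

end Complex

end MvPolynomial

section Pairings

variable {h : ℕ} (φ : MvPolynomial (Fin h) ℝ) (z : Fin h → ℂ)

theorem symp_omR_conjV_omR :
    symp (omR φ z) (conjV (omR φ z))
      = aeval (star z) φ - aeval z φ + dirDeriv z (star z) φ - dirDeriv (star z) z φ := by
  simp only [symp, omR, conjV, Fin.sum_univ_succ, Fin.cons_zero, Fin.cons_succ, map_neg,
    map_one, conj_aeval, dirDeriv_apply, Finset.sum_sub_distrib, Pi.star_apply,
    Complex.star_def]
  simp only [mul_comm (starRingEnd ℂ _)]
  ring

theorem symp_omRd_conjV_omRd (i j : Fin h) :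
    symp (omRd φ i z) (conjV (omRd φ j z))
      = aeval z (pderiv i (pderiv j φ)) - aeval (star z) (pderiv i (pderiv j φ)) := by
  classical
  simp only [symp, omRd, conjV, Fin.sum_univ_succ, Fin.cons_zero, Fin.cons_succ, map_zero,
    mul_zero, zero_mul, zero_add, conj_aeval, Pi.single_apply, apply_ite (starRingEnd ℂ),
    map_one, mul_ite, ite_mul, mul_one, one_mul, Finset.sum_sub_distrib, Finset.sum_ite_eq',
    Finset.mem_univ, if_true, pderiv_pderiv_comm j i]

theorem symp_omRd_conjV_omR (i : Fin h) :
    symp (omRd φ i z) (conjV (omR φ z))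
      = dirDeriv z (star z) (pderiv i φ) - aeval z (pderiv i φ)
        - aeval (star z) (pderiv i φ) := by
  classical
  simp only [symp, omRd, omR, conjV, Fin.sum_univ_succ, Fin.cons_zero, Fin.cons_succ, map_one,
    map_neg, conj_aeval, Pi.single_apply, ite_mul, mul_one, one_mul, zero_mul,
    Finset.sum_sub_distrib, Finset.sum_ite_eq', Finset.mem_univ, if_true, dirDeriv_apply,
    pderiv_pderiv_comm i, Pi.star_apply, Complex.star_def]
  simp only [mul_comm (starRingEnd ℂ _)]
  ring

end Pairings

theorem stmt12_general {h : ℕ} (φ : MvPolynomial (Fin h) ℝ)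
    (hφ : φ.IsHomogeneous 3) (z : Fin h → ℂ) (y : Fin h → ℝ)
    (hy : ∀ i, y i = (z i).im) :
    (symp (omR φ z) (conjV (omR φ z)) = 8 * Complex.I * (eval y φ : ℝ)) ∧
    (∀ i j : Fin h, symp (omRd φ i z) (conjV (omRd φ j z))
        = 2 * Complex.I * (eval y (pderiv i (pderiv j φ)) : ℝ)) ∧
    (∀ i : Fin h, symp (omRd φ i z) (conjV (omR φ z))
        = 4 * (eval y (pderiv i φ) : ℝ)) := by
  obtain rfl : y = fun k => (z k).im := funext hy
  refine ⟨?_, fun i j => ?_, fun i => ?_⟩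
  · rw [symp_omR_conjV_omR,
      aeval_star_sub_aeval_add_dirDeriv_star_sub_dirDeriv_of_isHomogeneous hφ]
  · rw [symp_omRd_conjV_omRd, aeval_sub_aeval_star_of_isHomogeneous hφ.pderiv.pderiv]
  · rw [symp_omRd_conjV_omR, dirDeriv_star_sub_aeval_sub_aeval_star_of_isHomogeneous hφ.pderiv]

/-- The basic real-structure identities for a real homogeneous cubic `φ`, writing
`y = Im z`:
`⟨ω(z), conj ω(z)⟩ = 8√−1·φ(y)`,
`⟨ω_i(z), conj ω_j(z)⟩ = 2√−1·(∂²φ/∂z_i∂z_j)(y)`,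
`⟨ω_i(z), conj ω(z)⟩ = 4·(∂φ/∂z_i)(y)`. -/
theorem stmt12 {h : ℕ} (hh : 1 ≤ h) (φ : MvPolynomial (Fin h) ℝ)
    (hφ : φ.IsHomogeneous 3) (z : Fin h → ℂ) (y : Fin h → ℝ)
    (hy : ∀ i, y i = (z i).im) :
    (symp (omR φ z) (conjV (omR φ z)) = 8 * Complex.I * (eval y φ : ℝ)) ∧
    (∀ i j : Fin h, symp (omRd φ i z) (conjV (omRd φ j z))
        = 2 * Complex.I * (eval y (pderiv i (pderiv j φ)) : ℝ)) ∧
    (∀ i : Fin h, symp (omRd φ i z) (conjV (omR φ z))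
        = 4 * (eval y (pderiv i φ) : ℝ)) :=
  stmt12_general φ hφ z y hy
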